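/- arXiv:2604.15949 — 7 statements merged into one kernel-verified Lean document; each statement's English description precedes it below -/
import Mathlib

section
/- (Mixed duplicate-cover criterion) Let A be a noncomputable computably enumerable set, let B be many-one equivalent to A, let h : A ≤_m B and f : B ≤_m A be many-one reductions. Suppose there is a c.e. set K ⊆ Aᶜ such that f⁻¹(K) is infinite and D_h \ (range(f) ∪ K) is finite. Then A ≤_fo B, i.e., there is a total computable function g with x ∈ A ↔ g(x) ∈ B for all x, all of whose fibres g⁻¹({y}) are finite. -/
open Set

/-- A many-one reduction from `A` to `B`: a total computable function preserving membership. -/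
def ManyOneRed (h : ℕ → ℕ) (A B : Set ℕ) : Prop :=
  Computable h ∧ ∀ x, x ∈ A ↔ h x ∈ B

/-- Many-one equivalence of sets of naturals. -/
def MEquiv (A B : Set ℕ) : Prop :=
  (∃ h, ManyOneRed h A B) ∧ (∃ f, ManyOneRed f B A)

/-- Finite-one reducibility: a many-one reduction all of whose fibres are finite. -/
def FORed (A B : Set ℕ) : Prop :=
  ∃ g : ℕ → ℕ, Computable g ∧ (∀ x, x ∈ A ↔ g x ∈ B) ∧ ∀ y, (g ⁻¹' {y}).Finite

/-- The set of negative duplicates of a reduction `h` with respect to `A`. -/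
def Dh (A : Set ℕ) (h : ℕ → ℕ) : Set ℕ :=
  {x | x ∉ A ∧ ∃ y < x, y ∉ A ∧ h y = h x}

section helpers
open Nat.Partrec (Code)
open Nat.Partrec.Code

lemma finite_computablePred {s : Set ℕ} (hs : s.Finite) : ComputablePred (· ∈ s) := by
  classical
  set l : List ℕ := hs.toFinset.toList with hl
  have hmem : ∀ x, x ∈ s ↔ x ∈ l := by
    intro x; rw [hl, Finset.mem_toList, Set.Finite.mem_toFinset]
  have hcomp : Computable fun x => decide (l.idxOf x < l.length) :=
    (Primrec.nat_lt.decide.comp (Primrec.list_idxOf₁ l) (Primrec.const l.length)).to_comp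
  refine ComputablePred.computable_iff.2 ⟨_, hcomp, funext fun x => ?_⟩
  simp [hmem x, List.idxOf_lt_length_iff]

lemma exists_mono_enum {p : ℕ → Prop} (hre : REPred p) (hinf : {x | p x}.Infinite) :
    ∃ b : ℕ → ℕ, Computable b ∧ StrictMono b ∧ ∀ n, p (b n) := by
  classical
  have hq : Partrec fun a : ℕ => (Part.assert (p a) fun _ => Part.some ()).map fun _ => (0:ℕ) :=
    hre.map ((Computable.const 0).to₂ : Computable₂ fun (_:ℕ) (_:Unit) => (0:ℕ))
  obtain ⟨cde, hcde⟩ := exists_code.1 (Partrec.nat_iff.1 hq)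
  have hdom : ∀ x, p x ↔ ∃ k, (evaln k cde x).isSome := by
    intro x
    constructor
    · intro hx
      have h0 : (0:ℕ) ∈ eval cde x := by
        rw [hcde]; simp [Part.mem_map_iff, Part.mem_assert_iff, hx]
      obtain ⟨k, hk⟩ := evaln_complete.1 h0
      exact ⟨k, by simp [Option.isSome_iff_exists]; exact ⟨_, hk⟩⟩
    · rintro ⟨k, hk⟩
      rw [Option.isSome_iff_exists] at hk
      obtain ⟨y, hy⟩ := hk
      have : y ∈ eval cde x := evaln_sound hy
      rw [hcde] at this
      simp [Part.mem_map_iff, Part.mem_assert_iff] at this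
      exact this.1
  set D : ℕ → ℕ → Bool := fun bound k =>
    decide (bound < k.unpair.1) && (evaln k.unpair.2 cde k.unpair.1).isSome with hD
  have hDc : Computable₂ D := by
    have h1 : Primrec₂ D := by
      have hu1 : Primrec fun k : ℕ => k.unpair.1 :=
        (Primrec.fst.comp Primrec.unpair)
      have hu2 : Primrec fun k : ℕ => k.unpair.2 :=
        (Primrec.snd.comp Primrec.unpair)
      have he : Primrec fun k : ℕ => (evaln k.unpair.2 cde k.unpair.1).isSome :=
        Primrec.option_isSome.comp
          (primrec_evaln.comp (((hu2.pair (Primrec.const cde)).pair hu1)))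
      exact Primrec₂.comp₂ Primrec.and
        (Primrec.nat_lt.decide.comp₂ Primrec₂.left (hu1.comp₂ Primrec₂.right))
        (he.comp₂ Primrec₂.right)
    exact h1.to_comp
  set ub : ℕ →. ℕ :=
    (fun bound => (Nat.rfind fun k => Part.some (D bound k)).map fun k => k.unpair.1) with hub
  have hubp : Partrec ub := by
    refine (Partrec.rfind hDc.partrec.to₂).map ?_
    exact ((Primrec.fst.comp Primrec.unpair).to_comp.comp Computable.snd).to₂
  have key : ∀ bound, ∃ v, v ∈ ub bound ∧ bound < v ∧ p v := by
    intro bound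
    obtain ⟨x, hx, hbx⟩ := hinf.exists_gt bound
    obtain ⟨k, hk⟩ := (hdom x).1 hx
    have hDtrue : D bound (Nat.pair x k) = true := by
      simp [hD, Nat.unpair_pair, hbx, hk]
    have hdom' : (Nat.rfind fun k => Part.some (D bound k)).Dom :=
      Nat.rfind_dom.2 ⟨Nat.pair x k, by simp [hDtrue], fun {m} _ => trivial⟩
    obtain ⟨k0, hk0⟩ := Part.dom_iff_mem.1 hdom'
    have hDk0 : D bound k0 = true := by
      have h' := Nat.rfind_spec hk0
      rw [Part.mem_some_iff] at h'
      exact h'.symm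
    rw [hD] at hDk0
    simp only [Bool.and_eq_true, decide_eq_true_eq] at hDk0
    refine ⟨k0.unpair.1, ?_, hDk0.1, (hdom _).2 ⟨k0.unpair.2, hDk0.2⟩⟩
    rw [hub]
    exact Part.mem_map _ hk0
  have hdomub : ∀ bound, (ub bound).Dom := fun bound =>
    Part.dom_iff_mem.2 ⟨_, (key bound).choose_spec.1⟩
  set uf : ℕ → ℕ := fun bound => (ub bound).get (hdomub bound) with hufdef
  have hufc : Computable uf := hubp.of_eq_tot fun n => Part.get_mem _
  have huf : ∀ bound, bound < uf bound ∧ p (uf bound) := by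
    intro bound
    obtain ⟨v, hv, h1, h2⟩ := key bound
    have : uf bound = v := Part.mem_unique (Part.get_mem _) hv
    rw [this]; exact ⟨h1, h2⟩
  refine ⟨fun n => Nat.rec (uf 0) (fun _ ih => uf ih) n, ?_, ?_, ?_⟩
  · exact (Computable.nat_rec Computable.id (Computable.const (uf 0))
      ((hufc.comp (Computable.snd.comp Computable.snd)).to₂ :
        Computable₂ fun (_ : ℕ) (pr : ℕ × ℕ) => uf pr.2)).of_eq fun n => by
      induction n with
      | zero => rfl
      | succ n ih => simp [ih]
  · refine strictMono_nat_of_lt_succ fun n => ?_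
    exact (huf _).1
  · intro n
    induction n with
    | zero => exact (huf 0).2
    | succ n ih => exact (huf _).2

end helpers

/-- Mixed duplicate-cover criterion. -/
theorem mixed_duplicate_cover (A B : Set ℕ)
    (hAce : REPred (· ∈ A)) (hAnc : ¬ComputablePred (· ∈ A))
    (hBce : REPred (· ∈ B)) (hequiv : MEquiv A B)
    (h f : ℕ → ℕ) (hh : ManyOneRed h A B) (hf : ManyOneRed f B A)
    (K : Set ℕ) (hKce : REPred (· ∈ K)) (hKsub : K ⊆ Aᶜ)
    (hKinf : (f ⁻¹' K).Infinite)
    (hDfin : (Dh A h \ (Set.range f ∪ K)).Finite) :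
    FORed A B := by
  classical
  obtain ⟨hhc, hhiff⟩ := hh
  obtain ⟨hfc, hfiff⟩ := hf
  -- B is noncomputable, hence infinite
  have hBnc : ¬ComputablePred (· ∈ B) := by
    intro hB
    apply hAnc
    obtain ⟨inst, hB'⟩ := ComputablePred.computable_iff.1 hB
    refine ComputablePred.computable_iff.2 ⟨fun x => inst (h x), ?_, funext fun x => ?_⟩
    · exact hB'.1.comp hhc
    · have := congrFun hB'.2 (h x)
      rw [propext (hhiff x), this]
  have hBinf : {x | x ∈ B}.Infinite := by
    by_contra hfin
    exact hBnc (finite_computablePred (Set.not_infinite.1 hfin))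
  obtain ⟨b, hbc, hbmono, hbB⟩ := exists_mono_enum hBce hBinf
  have hfKre : REPred (· ∈ f ⁻¹' K) := hKce.comp hfc
  obtain ⟨c, hcc, hcmono, hcK⟩ := exists_mono_enum hfKre hKinf
  -- exception list
  set l0 : List ℕ := hDfin.toFinset.toList with hl0def
  have hl0 : ∀ x, x ∈ l0 ↔ x ∈ Dh A h \ (Set.range f ∪ K) := fun x => by
    rw [hl0def, Finset.mem_toList, Set.Finite.mem_toFinset]
  -- the list of h-values below x
  have hLc : Computable fun x : ℕ => (List.range x).map h := by
    have step : Computable₂ fun (_ : ℕ) (pr : ℕ × List ℕ) => pr.2 ++ [h pr.1] :=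
      (Computable.list_concat.comp (Computable.snd.comp Computable.snd)
        (hhc.comp (Computable.fst.comp Computable.snd))).to₂
    refine (Computable.nat_rec Computable.id (Computable.const ([] : List ℕ)) step).of_eq
      fun n => ?_
    induction n with
    | zero => rfl
    | succ n ih =>
        simp only [id_eq] at ih ⊢
        rw [List.range_succ, List.map_append, ← ih]
        simp
  -- the boolean condition
  set m1 : ℕ → Bool := fun x =>
    decide (((List.range x).map h).idxOf (h x) < ((List.range x).map h).length) with hm1def
  set m2 : ℕ → Bool := fun x => decide (l0.idxOf x < l0.length) with hm2def
  have hm1c : Computable m1 :=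
    Primrec.nat_lt.decide.to_comp.comp
      (Primrec.list_idxOf.to_comp.comp hhc hLc)
      (Computable.list_length.comp hLc)
  have hm2c : Computable m2 :=
    (Primrec.nat_lt.decide.comp (Primrec.list_idxOf₁ l0) (Primrec.const l0.length)).to_comp
  have hm1t : ∀ x, m1 x = true ↔ ∃ y < x, h y = h x := by
    intro x
    rw [hm1def]
    simp only [decide_eq_true_eq, List.idxOf_lt_length_iff, List.mem_map]
    constructor
    · rintro ⟨y, hy, hyx⟩; exact ⟨y, List.mem_range.1 hy, hyx⟩
    · rintro ⟨y, hy, hyx⟩; exact ⟨y, List.mem_range.2 hy, hyx⟩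
  have hm2t : ∀ x, m2 x = true ↔ x ∈ l0 := by
    intro x; rw [hm2def]; simp [List.idxOf_lt_length_iff]
  set c1 : ℕ → Bool := fun x => bif m1 x then (bif m2 x then false else true) else false with hc1def
  have hc1c : Computable c1 :=
    Computable.cond hm1c
      (Computable.cond hm2c (Computable.const false) (Computable.const true))
      (Computable.const false)
  have hc1t : ∀ x, c1 x = true ↔ ((∃ y < x, h y = h x) ∧ x ∉ l0) := by
    intro x
    show (bif m1 x then (bif m2 x then false else true) else false) = true ↔ _
    rcases h1 : m1 x with _ | _
    · refine iff_of_false (by simp) ?_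
      rintro ⟨hex, -⟩
      have hcon := (hm1t x).2 hex
      rw [h1] at hcon; cases hcon
    · rcases h2 : m2 x with _ | _
      · refine iff_of_true rfl ⟨(hm1t x).1 h1, fun hx => ?_⟩
        have hcon := (hm2t x).2 hx
        rw [h2] at hcon; cases hcon
      · refine iff_of_false (by simp) ?_
        rintro ⟨-, hnx⟩
        exact hnx ((hm2t x).1 h2)
  -- the three partial branches
  set pA : ℕ →. ℕ := fun x => (Part.assert (x ∈ A) fun _ => Part.some (b x)) with hpAdef
  have pAp : Partrec pA := by
    refine (hAce.map ((hbc.comp Computable.fst).to₂ :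
      Computable₂ fun (a : ℕ) (_ : Unit) => b a)).of_eq fun x => ?_
    apply Part.ext
    intro y
    simp [hpAdef, Part.mem_assert_iff, Part.mem_map_iff, eq_comm]
  have pAmem : ∀ x y, y ∈ pA x ↔ (x ∈ A ∧ y = b x) := by
    intro x y; simp [hpAdef, Part.mem_assert_iff]
  have pAdom : ∀ x, (pA x).Dom ↔ x ∈ A := by
    intro x
    rw [Part.dom_iff_mem]
    constructor
    · rintro ⟨y, hy⟩; exact ((pAmem x y).1 hy).1
    · intro hx; exact ⟨b x, (pAmem x (b x)).2 ⟨hx, rfl⟩⟩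
  set pK : ℕ →. ℕ := fun x => (Part.assert (x ∈ K) fun _ => Part.some (c x)) with hpKdef
  have pKp : Partrec pK := by
    refine (hKce.map ((hcc.comp Computable.fst).to₂ :
      Computable₂ fun (a : ℕ) (_ : Unit) => c a)).of_eq fun x => ?_
    apply Part.ext
    intro y
    simp [hpKdef, Part.mem_assert_iff, Part.mem_map_iff, eq_comm]
  have pKmem : ∀ x y, y ∈ pK x ↔ (x ∈ K ∧ y = c x) := by
    intro x y; simp [hpKdef, Part.mem_assert_iff]
  have pKdom : ∀ x, (pK x).Dom ↔ x ∈ K := by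
    intro x
    rw [Part.dom_iff_mem]
    constructor
    · rintro ⟨y, hy⟩; exact ((pKmem x y).1 hy).1
    · intro hx; exact ⟨c x, (pKmem x (c x)).2 ⟨hx, rfl⟩⟩
  set pF : ℕ →. ℕ := fun x => Nat.rfind fun z => Part.some (decide (f z = x)) with hpFdef
  have pFp : Partrec pF := by
    refine Partrec.rfind ?_
    have : Computable₂ fun (x z : ℕ) => decide (f z = x) :=
      (Primrec.eq (α := ℕ)).decide.to_comp.comp₂ ((hfc.comp Computable.snd).to₂)
        ((Computable.fst).to₂)
    exact this.partrec.to₂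
  have pFmem : ∀ x y, y ∈ pF x → f y = x := by
    intro x y hy
    have := Nat.rfind_spec hy
    rw [Part.mem_some_iff] at this
    exact of_decide_eq_true this.symm
  have pFdom : ∀ x, x ∈ Set.range f → (pF x).Dom := by
    rintro x ⟨z, hz⟩
    exact Nat.rfind_dom.2 ⟨z, by simp [hz], fun {m} _ => trivial⟩
  obtain ⟨q1, q1p, q1spec⟩ := Partrec.merge' pAp pKp
  obtain ⟨q2, q2p, q2spec⟩ := Partrec.merge' q1p pFp
  set G : ℕ →. ℕ := fun x => bif c1 x then q2 x else Part.some (h x) with hGdef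
  have hGp : Partrec G := Partrec.cond hc1c q2p hhc.partrec
  have domG : ∀ x, (G x).Dom := by
    intro x
    rcases hx : c1 x with _ | _
    · rw [hGdef]; simp [hx]
    · obtain ⟨⟨y, hyx, hy⟩, hxl0⟩ := (hc1t x).1 hx
      rw [hGdef]; simp only [hx, Bool.cond_true]
      rw [(q2spec x).2, (q1spec x).2, pAdom, pKdom]
      by_cases hxA : x ∈ A
      · exact Or.inl (Or.inl hxA)
      by_cases hxK : x ∈ K
      · exact Or.inl (Or.inr hxK)
      by_cases hxR : x ∈ Set.range f
      · exact Or.inr (pFdom x hxR)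
      · exfalso
        have hex : ∃ z, h z = h x := ⟨x, rfl⟩
        set y0 := Nat.find hex with hy0def
        have hy0 : h y0 = h x := Nat.find_spec hex
        have hy0le : y0 ≤ y := Nat.find_min' hex hy
        have hy0x : y0 < x := lt_of_le_of_lt hy0le hyx
        have hy0A : y0 ∉ A := by
          intro hy0A
          exact hxA ((hhiff x).2 (hy0 ▸ (hhiff y0).1 hy0A))
        have : x ∈ Dh A h := ⟨hxA, y0, hy0x, hy0A, hy0⟩
        exact hxl0 ((hl0 x).2 ⟨this, fun hmem => by
          rcases hmem with hR | hK
          · exact hxR hR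
          · exact hxK hK⟩)
  set g : ℕ → ℕ := fun x => (G x).get (domG x) with hgdef
  have hgc : Computable g := hGp.of_eq_tot fun x => Part.get_mem _
  have gmem : ∀ x, g x ∈ G x := fun x => Part.get_mem _
  have gcases : ∀ x, (c1 x = false ∧ g x = h x) ∨ (x ∈ A ∧ g x = b x) ∨
      (x ∈ K ∧ g x = c x) ∨ f (g x) = x := by
    intro x
    have hm := gmem x
    rcases hx : c1 x with _ | _
    · left
      refine ⟨rfl, ?_⟩
      rw [hGdef] at hm; simp only [hx, Bool.cond_false, Part.mem_some_iff] at hm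
      exact hm
    · right
      rw [hGdef] at hm; simp only [hx, Bool.cond_true] at hm
      rcases (q2spec x).1 _ hm with h1 | hF
      · rcases (q1spec x).1 _ h1 with hA | hK
        · obtain ⟨hxA, hgb⟩ := (pAmem x _).1 hA
          exact Or.inl ⟨hxA, hgb⟩
        · obtain ⟨hxK, hgc'⟩ := (pKmem x _).1 hK
          exact Or.inr (Or.inl ⟨hxK, hgc'⟩)
      · exact Or.inr (Or.inr (pFmem x _ hF))
  refine ⟨g, hgc, ?_, ?_⟩
  · intro x
    rcases gcases x with ⟨-, hg⟩ | ⟨hxA, hg⟩ | ⟨hxK, hg⟩ | hR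
    · rw [hg]; exact hhiff x
    · rw [hg]; exact iff_of_true hxA (hbB x)
    · rw [hg]
      refine iff_of_false (fun hxA => hKsub hxK hxA) (fun hB => ?_)
      exact hKsub (hcK x) ((hfiff (c x)).1 hB)
    · have := (hfiff (g x)).symm
      rwa [hR] at this
  · intro w
    have hsub : g ⁻¹' {w} ⊆
        ({x | h x = w ∧ ∀ y < x, h y ≠ h x} ∪ {x | x ∈ l0} ∪ b ⁻¹' {w} ∪ c ⁻¹' {w} ∪ {f w}) := by
      intro x hx
      have hxw : g x = w := hx
      rcases gcases x with ⟨hc1f, hg⟩ | ⟨hxA, hg⟩ | ⟨hxK, hg⟩ | hR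
      · have hnot : ¬((∃ y < x, h y = h x) ∧ x ∉ l0) := by
          intro hcon
          rw [(hc1t x).2 hcon] at hc1f; cases hc1f
        rcases Classical.em (x ∈ l0) with hxl | hxl
        · exact Or.inl (Or.inl (Or.inl (Or.inr hxl)))
        · refine Or.inl (Or.inl (Or.inl (Or.inl ⟨by rw [← hg]; exact hxw, ?_⟩)))
          intro y hy hyx
          exact hnot ⟨⟨y, hy, hyx⟩, hxl⟩
      · have hbw : b x = w := by rw [← hg]; exact hxw
        exact Or.inl (Or.inl (Or.inr hbw))
      · have hcw : c x = w := by rw [← hg]; exact hxw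
        exact Or.inl (Or.inr hcw)
      · have hfw : x = f w := by rw [← hxw]; exact hR.symm
        exact Or.inr hfw
    have h1fin : ({x | h x = w ∧ ∀ y < x, h y ≠ h x} : Set ℕ).Finite := by
      apply Set.Subsingleton.finite
      intro a ha a' ha'
      rcases lt_trichotomy a a' with hlt | heq | hlt
      · exact absurd (ha.1.trans ha'.1.symm) (ha'.2 a hlt)
      · exact heq
      · exact absurd (ha'.1.trans ha.1.symm) (ha.2 a' hlt)
    have h3fin : (b ⁻¹' {w}).Finite := by
      apply Set.Subsingleton.finite
      intro a ha a' ha'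
      rw [Set.mem_preimage, Set.mem_singleton_iff] at ha ha'
      exact hbmono.injective (ha.trans ha'.symm)
    have h4fin : (c ⁻¹' {w}).Finite := by
      apply Set.Subsingleton.finite
      intro a ha a' ha'
      rw [Set.mem_preimage, Set.mem_singleton_iff] at ha ha'
      exact hcmono.injective (ha.trans ha'.symm)
    exact ((((h1fin.union (l0.finite_toSet)).union h3fin).union h4fin).union
      (Set.finite_singleton (f w))).subset hsub
end

section
/- (Finite-union reserve criterion) Let A be a noncomputable c.e. set. Suppose there exist a set T ⊆ Aᶜ and c.e. sets K₀, K₁, … ⊆ Aᶜ such that for every B ≡_m A: (1) for every many-one reduction f : B ≤_m A there are a finite F ⊆ ω and j ∈ ω such that Aᶜ \ (T ∪ ⋃_{i∈F} K_i) is almost contained in range(f) and f⁻¹(K_j) is infinite; and (2) for every many-one reduction h : A ≤_m B, D_h ∩ T is finite. Then for every B ≡_m A, A ≤_fo B. -/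
open Set

section FURAux

open Nat.Partrec (Code)
open Nat.Partrec.Code

/-- Staged (primitive recursive) approximation of an r.e. predicate on `ℕ`. -/
theorem fur_exists_stage {p : ℕ → Prop} (hp : REPred p) :
    ∃ q : ℕ → ℕ → Bool, Primrec₂ q ∧ ∀ x, p x ↔ ∃ s, q s x = true := by
  have h1 : Partrec fun a : ℕ => (Part.assert (p a) fun _ => Part.some ()).map fun _ => (0 : ℕ) :=
    Partrec.map hp (Computable.const 0)
  obtain ⟨c, hc⟩ := exists_code.1 (Partrec.nat_iff.1 h1)
  refine ⟨fun s x => (evaln s c x).isSome, ?_, ?_⟩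
  · exact Primrec.option_isSome.comp
      (primrec_evaln.comp ((Primrec.fst.pair (Primrec.const c)).pair Primrec.snd))
  · intro x
    constructor
    · intro hx
      have h0 : (0 : ℕ) ∈ eval c x := by
        rw [hc]
        exact Part.mem_map _ (Part.mem_assert hx (Part.mem_some ()))
      obtain ⟨k, hk⟩ := evaln_complete.1 h0
      exact ⟨k, Option.isSome_iff_exists.mpr ⟨0, hk⟩⟩
    · rintro ⟨s, hs⟩
      obtain ⟨y, hy⟩ := Option.isSome_iff_exists.mp hs
      have hm : y ∈ eval c x := evaln_sound (Option.mem_def.mpr hy)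
      rw [hc] at hm
      obtain ⟨a, ha, -⟩ := (Part.mem_map_iff _).mp hm
      obtain ⟨hpx, -⟩ := Part.mem_assert_iff.mp ha
      exact hpx

theorem fur_primrec_mem (l : List ℕ) : Primrec fun x => decide (x ∈ l) := by
  induction l with
  | nil => exact (Primrec.const false).of_eq (by simp)
  | cons a t ih =>
    exact (Primrec.or.comp (Primrec.eq.decide.comp Primrec.id (Primrec.const a)) ih).of_eq
      (fun x => by by_cases h1 : x = a <;> by_cases h2 : x ∈ t <;>
        simp [h1, h2, List.mem_cons])

theorem fur_computablePred_of_finite {S : Set ℕ} (hS : S.Finite) :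
    ComputablePred (· ∈ S) := by
  classical
  refine ComputablePred.computable_iff.2
    ⟨fun x => decide (x ∈ hS.toFinset.toList), (fur_primrec_mem _).to_comp, ?_⟩
  funext x
  simp [Finset.mem_toList, Set.Finite.mem_toFinset]

/-- Detecting whether `x` has a smaller companion with the same `h`-value. -/
def furDup (h : ℕ → ℕ) (x : ℕ) : Bool :=
  Nat.rec false (fun y b => b || decide (h y = h x)) x

theorem furDup_iff (h : ℕ → ℕ) (x : ℕ) :
    furDup h x = true ↔ ∃ y, y < x ∧ h y = h x := by
  suffices H : ∀ n, (Nat.rec false (fun y b => b || decide (h y = h x)) n : Bool) = true ↔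
      ∃ y, y < n ∧ h y = h x from H x
  intro n
  induction n with
  | zero => simp
  | succ n ih =>
    show (Nat.rec false (fun y b => b || decide (h y = h x)) n || decide (h n = h x)) = true ↔ _
    rw [Bool.or_eq_true, ih, decide_eq_true_eq]
    constructor
    · rintro (⟨y, hy, he⟩ | he)
      · exact ⟨y, Nat.lt_succ_of_lt hy, he⟩
      · exact ⟨n, Nat.lt_succ_self n, he⟩
    · rintro ⟨y, hy, he⟩
      rcases Nat.lt_succ_iff_lt_or_eq.mp hy with hy' | rfl
      · exact Or.inl ⟨y, hy', he⟩
      · exact Or.inr he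

theorem furDup_computable {h : ℕ → ℕ} (hh : Computable h) : Computable (furDup h) := by
  have e : Computable fun q : ℕ × (ℕ × Bool) => q.2.2 || decide (h q.2.1 = h q.1) :=
    Primrec.or.to_comp.comp (Computable.snd.comp Computable.snd)
      (Primrec.eq.decide.to_comp.comp (hh.comp (Computable.fst.comp Computable.snd))
        (hh.comp Computable.fst))
  have e2 : Computable₂ fun (a : ℕ) (p : ℕ × Bool) => p.2 || decide (h p.1 = h a) := e
  exact (Computable.nat_rec Computable.id (Computable.const false) e2).of_eq fun x => rfl

end FURAux

section FURConstr

/-- First search: look for evidence `x ∈ A` (enumeration stage), `x ∈ K` (stage), or `x ∈ range f`. -/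
def furStep1 (qA qK : ℕ → ℕ → Bool) (f : ℕ → ℕ) (x m : ℕ) : Option ℕ :=
  cond (qA m.unpair.1 x) (some 0) <|
    cond (qK m.unpair.1 x) (some 1) <|
      cond (decide (f m.unpair.2 = x)) (some (m.unpair.2 + 2)) none

/-- Second search: produce a suitable output value. -/
def furStep2 (qB qV : ℕ → ℕ → Bool) (x r m : ℕ) : Option ℕ :=
  cond (decide (r = 0))
    (cond (qB m.unpair.1 m.unpair.2 && decide (x ≤ m.unpair.2)) (some m.unpair.2) none) <|
  cond (decide (r = 1))
    (cond (qV m.unpair.1 m.unpair.2 && decide (x ≤ m.unpair.2)) (some m.unpair.2) none) <|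
  some (r - 2)

def furSearch (qA qK qB qV : ℕ → ℕ → Bool) (f : ℕ → ℕ) (x : ℕ) : Part ℕ :=
  (Nat.rfindOpt (furStep1 qA qK f x)).bind fun r => Nat.rfindOpt (furStep2 qB qV x r)

def furPre (h : ℕ → ℕ) (L : List ℕ) (x : ℕ) : ℕ ⊕ ℕ :=
  cond (decide (x ∈ L) || !furDup h x) (Sum.inl (h x)) (Sum.inr x)

def furG (h f : ℕ → ℕ) (qA qK qB qV : ℕ → ℕ → Bool) (L : List ℕ) (x : ℕ) : Part ℕ :=
  Sum.casesOn (furPre h L x) (fun b => Part.some b) (fun x' => furSearch qA qK qB qV f x')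

theorem furStep1_sound {qA qK : ℕ → ℕ → Bool} {f : ℕ → ℕ} {x m a : ℕ}
    (hm : a ∈ furStep1 qA qK f x m) :
    (a = 0 ∧ qA m.unpair.1 x = true) ∨ (a = 1 ∧ qK m.unpair.1 x = true) ∨
      (a = m.unpair.2 + 2 ∧ f m.unpair.2 = x) := by
  unfold furStep1 at hm
  rcases h1 : qA m.unpair.1 x <;> rw [h1] at hm
  · rcases h2 : qK m.unpair.1 x <;> rw [h2] at hm
    · rcases h3 : decide (f m.unpair.2 = x) <;> rw [h3] at hm
      · simp at hm
      · simp at hm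
        exact Or.inr (Or.inr ⟨hm.symm, of_decide_eq_true h3⟩)
    · simp at hm
      exact Or.inr (Or.inl ⟨hm.symm, rfl⟩)
  · simp at hm
    exact Or.inl ⟨hm.symm, rfl⟩

theorem furStep2_zero {qB qV : ℕ → ℕ → Bool} {x m a : ℕ}
    (hm : a ∈ furStep2 qB qV x 0 m) :
    a = m.unpair.2 ∧ qB m.unpair.1 m.unpair.2 = true ∧ x ≤ a := by
  unfold furStep2 at hm
  rcases h1 : qB m.unpair.1 m.unpair.2 && decide (x ≤ m.unpair.2) <;> rw [h1] at hm <;>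
    simp at hm
  obtain ⟨hq, hle⟩ := Bool.and_eq_true_iff.mp h1
  exact ⟨hm.symm, hq, hm ▸ of_decide_eq_true hle⟩

theorem furStep2_one {qB qV : ℕ → ℕ → Bool} {x m a : ℕ}
    (hm : a ∈ furStep2 qB qV x 1 m) :
    a = m.unpair.2 ∧ qV m.unpair.1 m.unpair.2 = true ∧ x ≤ a := by
  unfold furStep2 at hm
  rcases h1 : qV m.unpair.1 m.unpair.2 && decide (x ≤ m.unpair.2) <;> rw [h1] at hm <;>
    simp at hm
  obtain ⟨hq, hle⟩ := Bool.and_eq_true_iff.mp h1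
  exact ⟨hm.symm, hq, hm ▸ of_decide_eq_true hle⟩

theorem furStep2_ge {qB qV : ℕ → ℕ → Bool} {x r m : ℕ} :
    furStep2 qB qV x (r + 2) m = some r := by
  unfold furStep2
  simp

theorem furG_partrec {h f : ℕ → ℕ} {qA qK qB qV : ℕ → ℕ → Bool} (L : List ℕ)
    (hh : Computable h) (hf : Computable f)
    (hqA : Computable₂ qA) (hqK : Computable₂ qK) (hqB : Computable₂ qB)
    (hqV : Computable₂ qV) : Partrec (furG h f qA qK qB qV L) := by
  have hup : Computable (fun p : ℕ × ℕ => p.2.unpair) :=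
    Primrec.unpair.to_comp.comp Computable.snd
  have hs1 : Computable₂ (furStep1 qA qK f) := by
    have c1 : Computable fun p : ℕ × ℕ => qA p.2.unpair.1 p.1 :=
      hqA.comp (Computable.fst.comp hup) Computable.fst
    have c2 : Computable fun p : ℕ × ℕ => qK p.2.unpair.1 p.1 :=
      hqK.comp (Computable.fst.comp hup) Computable.fst
    have c3 : Computable fun p : ℕ × ℕ => decide (f p.2.unpair.2 = p.1) :=
      Primrec.eq.decide.to_comp.comp (hf.comp (Computable.snd.comp hup)) Computable.fst
    have v3 : Computable fun p : ℕ × ℕ => (some (p.2.unpair.2 + 2) : Option ℕ) :=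
      Computable.option_some.comp
        ((Primrec.nat_add.comp (Primrec.snd.comp (Primrec.unpair.comp Primrec.snd))
          (Primrec.const 2)).to_comp)
    exact Computable.cond c1 (Computable.const (some 0))
      (Computable.cond c2 (Computable.const (some 1))
        (Computable.cond c3 v3 (Computable.const none)))
  have hs2 : Computable₂ fun (p : ℕ × ℕ) (m : ℕ) => furStep2 qB qV p.1 p.2 m := by
    have hup2 : Computable (fun q : (ℕ × ℕ) × ℕ => q.2.unpair) :=
      Primrec.unpair.to_comp.comp Computable.snd
    have d0 : Computable fun q : (ℕ × ℕ) × ℕ => decide (q.1.2 = 0) :=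
      Primrec.eq.decide.to_comp.comp (Computable.snd.comp Computable.fst) (Computable.const 0)
    have d1 : Computable fun q : (ℕ × ℕ) × ℕ => decide (q.1.2 = 1) :=
      Primrec.eq.decide.to_comp.comp (Computable.snd.comp Computable.fst) (Computable.const 1)
    have hle : Computable fun q : (ℕ × ℕ) × ℕ => decide (q.1.1 ≤ q.2.unpair.2) :=
      Primrec.nat_le.decide.to_comp.comp (Computable.fst.comp Computable.fst)
        (Computable.snd.comp hup2)
    have hsome : Computable fun q : (ℕ × ℕ) × ℕ => (some q.2.unpair.2 : Option ℕ) :=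
      Computable.option_some.comp (Computable.snd.comp hup2)
    have i0 : Computable fun q : (ℕ × ℕ) × ℕ =>
        cond (qB q.2.unpair.1 q.2.unpair.2 && decide (q.1.1 ≤ q.2.unpair.2))
          (some q.2.unpair.2) none :=
      Computable.cond (Primrec.and.to_comp.comp
          (hqB.comp (Computable.fst.comp hup2) (Computable.snd.comp hup2)) hle)
        hsome (Computable.const none)
    have i1 : Computable fun q : (ℕ × ℕ) × ℕ =>
        cond (qV q.2.unpair.1 q.2.unpair.2 && decide (q.1.1 ≤ q.2.unpair.2))
          (some q.2.unpair.2) none :=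
      Computable.cond (Primrec.and.to_comp.comp
          (hqV.comp (Computable.fst.comp hup2) (Computable.snd.comp hup2)) hle)
        hsome (Computable.const none)
    have isub : Computable fun q : (ℕ × ℕ) × ℕ => (some (q.1.2 - 2) : Option ℕ) :=
      Computable.option_some.comp
        ((Primrec.nat_sub.comp (Primrec.snd.comp Primrec.fst) (Primrec.const 2)).to_comp)
    exact Computable.cond d0 i0 (Computable.cond d1 i1 isub)
  have hsearch : Partrec (furSearch qA qK qB qV f) :=
    (Partrec.rfindOpt hs1).bind (Partrec.rfindOpt hs2)
  have hpre : Computable (furPre h L) :=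
    Computable.cond
      (Primrec.or.to_comp.comp (fur_primrec_mem L).to_comp
        (Primrec.not.to_comp.comp (furDup_computable hh)))
      (Computable.sumInl.comp hh) Computable.sumInr
  have hcases : Partrec fun a : ℕ =>
      Sum.casesOn (furPre h L a) (fun b => Part.some ((fun (_ : ℕ) (b : ℕ) => b) a b))
        ((fun (_ : ℕ) (x' : ℕ) => furSearch qA qK qB qV f x') a) :=
    Partrec.sumCasesOn_right hpre
      (show Computable₂ fun (_ : ℕ) (b : ℕ) => b from Computable.snd)
      (show Partrec₂ fun (_ : ℕ) (x' : ℕ) => furSearch qA qK qB qV f x' from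
        hsearch.comp Computable.snd)
  exact hcases.of_eq fun x => rfl

end FURConstr

section FURMain

theorem furPre_cases (h : ℕ → ℕ) (L : List ℕ) (x : ℕ) :
    ((x ∈ L ∨ furDup h x = false) ∧ furPre h L x = Sum.inl (h x)) ∨
      (x ∉ L ∧ furDup h x = true ∧ furPre h L x = Sum.inr x) := by
  unfold furPre
  rcases hb : (decide (x ∈ L) || !furDup h x) with _ | _
  · rw [Bool.or_eq_false_iff] at hb
    obtain ⟨h1, h2⟩ := hb
    refine Or.inr ⟨by simpa using h1, by simpa using h2, rfl⟩
  · rw [Bool.or_eq_true] at hb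
    refine Or.inl ⟨?_, rfl⟩
    rcases hb with h1 | h2
    · exact Or.inl (of_decide_eq_true h1)
    · exact Or.inr (by simpa using h2)

theorem fur_aux (A B : Set ℕ) (h f : ℕ → ℕ)
    (hhc : Computable h) (hhr : ∀ x, x ∈ A ↔ h x ∈ B)
    (hfc : Computable f) (hfr : ∀ x, x ∈ B ↔ f x ∈ A)
    (qA qK qB qV : ℕ → ℕ → Bool)
    (qAp : Computable₂ qA) (qAs : ∀ x, x ∈ A ↔ ∃ s, qA s x = true)
    (qKp : Computable₂ qK) (qKs : ∀ s x, qK s x = true → x ∉ A)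
    (qBp : Computable₂ qB) (qBs : ∀ s w, qB s w = true → w ∈ B)
    (qBi : ∀ n, ∃ s w, qB s w = true ∧ n ≤ w)
    (qVp : Computable₂ qV) (qVs : ∀ s z, qV s z = true → z ∉ B)
    (qVi : ∀ n, ∃ s z, qV s z = true ∧ n ≤ z)
    (L : List ℕ)
    (hcov : ∀ x, x ∉ A → x ∉ L → (∃ y, y < x ∧ h y = h x) →
      (∃ s, qK s x = true) ∨ ∃ z, f z = x) :
    FORed A B := by
  classical
  -- totality
  have hdom : ∀ x, (furG h f qA qK qB qV L x).Dom := by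
    intro x
    rcases furPre_cases h L x with ⟨-, hpre⟩ | ⟨hL, hdup, hpre⟩
    · unfold furG
      rw [hpre]
      exact trivial
    · unfold furG
      rw [hpre]
      show (furSearch qA qK qB qV f x).Dom
      -- the first search halts
      have h1 : ∃ n a, a ∈ furStep1 qA qK f x n := by
        have hcover : (∃ s, qA s x = true) ∨ (∃ s, qK s x = true) ∨ ∃ z, f z = x := by
          by_cases hxA : x ∈ A
          · exact Or.inl ((qAs x).mp hxA)
          · rcases hcov x hxA hL ((furDup_iff h x).mp hdup) with hk | hz
            · exact Or.inr (Or.inl hk)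
            · exact Or.inr (Or.inr hz)
        rcases hcover with ⟨s, hs⟩ | ⟨s, hs⟩ | ⟨z, hz⟩
        · refine ⟨Nat.pair s 0, 0, ?_⟩
          unfold furStep1
          rw [Nat.unpair_pair]
          simp [hs]
        · refine ⟨Nat.pair s 0, ?_⟩
          unfold furStep1
          rw [Nat.unpair_pair]
          rcases hA : qA s x with _ | _
          · exact ⟨1, by simp [hs]⟩
          · exact ⟨0, by simp⟩
        · refine ⟨Nat.pair 0 z, ?_⟩
          unfold furStep1
          rw [Nat.unpair_pair]
          rcases hA : qA 0 x with _ | _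
          · rcases hK : qK 0 x with _ | _
            · exact ⟨z + 2, by simp [hz]⟩
            · exact ⟨1, by simp⟩
          · exact ⟨0, by simp⟩
      obtain ⟨r, hr⟩ := Part.dom_iff_mem.mp (Nat.rfindOpt_dom.mpr h1)
      -- the second search halts
      have h2 : ∃ n a, a ∈ furStep2 qB qV x r n := by
        obtain ⟨n, hn⟩ := Nat.rfindOpt_spec hr
        rcases furStep1_sound hn with ⟨rfl, -⟩ | ⟨rfl, -⟩ | ⟨rfl, -⟩
        · obtain ⟨s, w, hq, hle⟩ := qBi x
          refine ⟨Nat.pair s w, w, ?_⟩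
          unfold furStep2
          rw [Nat.unpair_pair]
          simp [hq, hle]
        · obtain ⟨s, z, hq, hle⟩ := qVi x
          refine ⟨Nat.pair s z, z, ?_⟩
          unfold furStep2
          rw [Nat.unpair_pair]
          simp [hq, hle]
        · exact ⟨0, n.unpair.2, by rw [furStep2_ge]; rfl⟩
      obtain ⟨v, hv⟩ := Part.dom_iff_mem.mp (Nat.rfindOpt_dom.mpr h2)
      exact Part.dom_iff_mem.mpr ⟨v, Part.mem_bind_iff.mpr ⟨r, hr, hv⟩⟩
  set g : ℕ → ℕ := fun x => (furG h f qA qK qB qV L x).get (hdom x) with hgdef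
  have hmem : ∀ x, g x ∈ furG h f qA qK qB qV L x := fun x => Part.get_mem _
  -- case analysis on the value of g
  have hval : ∀ x, ((x ∈ L ∨ furDup h x = false) ∧ g x = h x) ∨
      (x ∉ L ∧ furDup h x = true ∧ g x ∈ furSearch qA qK qB qV f x) := by
    intro x
    have hm := hmem x
    rcases furPre_cases h L x with ⟨hc, hpre⟩ | ⟨hL, hdup, hpre⟩
    · left
      refine ⟨hc, ?_⟩
      unfold furG at hm
      rw [hpre] at hm
      exact Part.mem_some_iff.mp hm
    · right
      refine ⟨hL, hdup, ?_⟩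
      unfold furG at hm
      rw [hpre] at hm
      exact hm
  -- detailed analysis of the search branch
  have hsval : ∀ x, g x ∈ furSearch qA qK qB qV f x →
      (x ∈ A ∧ g x ∈ B ∧ x ≤ g x) ∨ (x ∉ A ∧ g x ∉ B ∧ x ≤ g x) ∨
        (f (g x) = x ∧ (x ∈ A ↔ g x ∈ B)) := by
    intro x hs
    obtain ⟨r, hr, hv⟩ := Part.mem_bind_iff.mp hs
    obtain ⟨n, hn⟩ := Nat.rfindOpt_spec hr
    rcases furStep1_sound hn with ⟨rfl, hq⟩ | ⟨rfl, hq⟩ | ⟨rfl, hq⟩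
    · obtain ⟨n2, hn2⟩ := Nat.rfindOpt_spec hv
      obtain ⟨he, hB, hle⟩ := furStep2_zero hn2
      exact Or.inl ⟨(qAs x).mpr ⟨_, hq⟩, qBs _ _ (he ▸ hB), hle⟩
    · obtain ⟨n2, hn2⟩ := Nat.rfindOpt_spec hv
      obtain ⟨he, hV, hle⟩ := furStep2_one hn2
      exact Or.inr (Or.inl ⟨qKs _ _ hq, fun hB => qVs _ _ hV (he ▸ hB), hle⟩)
    · obtain ⟨n2, hn2⟩ := Nat.rfindOpt_spec hv
      rw [furStep2_ge] at hn2
      have he : g x = n.unpair.2 := by simpa using hn2.symm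
      refine Or.inr (Or.inr ⟨by rw [he]; exact hq, ?_⟩)
      rw [he, ← hq]
      exact (hfr n.unpair.2).symm
  refine ⟨g, Partrec.of_eq_tot (furG_partrec L hhc hfc qAp qKp qBp qVp) hmem, ?_, ?_⟩
  · -- correctness
    intro x
    rcases hval x with ⟨-, he⟩ | ⟨-, -, hs⟩
    · rw [he]; exact hhr x
    · rcases hsval x hs with ⟨h1, h2, -⟩ | ⟨h1, h2, -⟩ | ⟨-, hiff⟩
      · exact iff_of_true h1 h2
      · exact iff_of_false h1 h2
      · exact hiff
  · -- finite fibres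
    intro y
    have hS0 : {x : ℕ | furDup h x = false ∧ h x = y}.Finite := by
      apply Set.Subsingleton.finite
      intro a ha b hb
      by_contra hne
      rcases lt_trichotomy a b with hlt | heq | hgt
      · have : furDup h b = true := (furDup_iff h b).mpr ⟨a, hlt, by rw [ha.2, hb.2]⟩
        rw [hb.1] at this
        exact Bool.false_ne_true this
      · exact hne heq
      · have : furDup h a = true := (furDup_iff h a).mpr ⟨b, hgt, by rw [ha.2, hb.2]⟩
        rw [ha.1] at this
        exact Bool.false_ne_true this
    refine Set.Finite.subset
      ((((L.finite_toSet).union (Set.finite_Iic y)).union (Set.finite_singleton (f y))).union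
        hS0) ?_
    intro x hx
    have hxy : g x = y := hx
    rcases hval x with ⟨hc, he⟩ | ⟨hL, hdup, hs⟩
    · rcases hc with hxL | hdf
      · exact Or.inl (Or.inl (Or.inl hxL))
      · exact Or.inr ⟨hdf, by rw [← he, hxy]⟩
    · rcases hsval x hs with ⟨-, -, hle⟩ | ⟨-, -, hle⟩ | ⟨hfz, -⟩
      · exact Or.inl (Or.inl (Or.inr (by simpa using hxy ▸ hle)))
      · exact Or.inl (Or.inl (Or.inr (by simpa using hxy ▸ hle)))
      · refine Or.inl (Or.inr ?_)
        have : x = f y := by rw [← hxy]; exact hfz.symm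
        simp [this]

end FURMain

/-- Finite-union reserve criterion. -/
theorem finite_union_reserve (A : Set ℕ)
    (hAce : REPred (· ∈ A)) (hAnc : ¬ComputablePred (· ∈ A))
    (T : Set ℕ) (hT : T ⊆ Aᶜ)
    (K : ℕ → Set ℕ) (hKce : ∀ i, REPred (· ∈ K i)) (hKsub : ∀ i, K i ⊆ Aᶜ)
    (hback : ∀ B : Set ℕ, MEquiv A B → ∀ f : ℕ → ℕ, ManyOneRed f B A →
      ∃ F : Finset ℕ, ∃ j : ℕ,
        ((Aᶜ \ (T ∪ ⋃ i ∈ F, K i)) \ Set.range f).Finite ∧ (f ⁻¹' K j).Infinite)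
    (hfwd : ∀ B : Set ℕ, MEquiv A B → ∀ h : ℕ → ℕ, ManyOneRed h A B →
      (Dh A h ∩ T).Finite) :
    ∀ B : Set ℕ, MEquiv A B → FORed A B := by
  classical
  intro B hBE
  obtain ⟨⟨h, hhc, hhr⟩, f, hfc, hfr⟩ := id hBE
  -- `B` is c.e.
  have hBce : REPred (· ∈ B) := by
    have hp : Partrec fun x : ℕ => Part.assert (f x ∈ A) fun _ => Part.some () :=
      Partrec.comp hAce hfc
    exact REPred.of_eq hp fun x => (hfr x).symm
  -- `B` is infinite
  have hBI : B.Infinite := by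
    have : ¬B.Finite := by
      intro hfin
      apply hAnc
      obtain ⟨fb, hfb, hfbe⟩ := ComputablePred.computable_iff.1
        (fur_computablePred_of_finite hfin)
      refine ComputablePred.computable_iff.2 ⟨fun x => fb (h x), hfb.comp hhc, ?_⟩
      funext x
      exact propext ((hhr x).trans (iff_of_eq (congrFun hfbe (h x))))
    exact this
  obtain ⟨F, j, hcovfin, hinfKj⟩ := hback B hBE f ⟨hfc, hfr⟩
  have hDfin : (Dh A h ∩ T).Finite := hfwd B hBE h ⟨hhc, hhr⟩
  -- stage functions
  obtain ⟨qA, qAp, qAs⟩ := fur_exists_stage hAce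
  have hKst : ∀ i, ∃ q : ℕ → ℕ → Bool, Primrec₂ q ∧ ∀ x, x ∈ K i ↔ ∃ s, q s x = true :=
    fun i => fur_exists_stage (hKce i)
  choose qKst qKstp qKsts using hKst
  obtain ⟨qBst, qBstp, qBsts⟩ := fur_exists_stage hBce
  -- merged stage function for the finite union of the `K i`, `i ∈ F`, together with `K j`
  have lprim : ∀ l : List ℕ, Primrec₂ fun s x => l.any fun i => qKst i s x := by
    intro l
    induction l with
    | nil =>
      simp only [List.any_nil]
      exact (Primrec.const false).to₂
    | cons a t ih =>
      simp only [List.any_cons]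
      exact Primrec.or.comp (qKstp a) ih
  set KS : ℕ → ℕ → Bool := fun s x => (F.toList.any fun i => qKst i s x) || qKst j s x
    with hKSdef
  have KSp : Primrec₂ KS := Primrec.or.comp (lprim F.toList) (qKstp j)
  have KSsound : ∀ s x, KS s x = true → x ∉ A := by
    intro s x hsx
    rw [Bool.or_eq_true] at hsx
    rcases hsx with hany | hj
    · obtain ⟨i, hi, hq⟩ := List.any_eq_true.mp hany
      exact hKsub i ((qKsts i x).mpr ⟨s, hq⟩)
    · exact hKsub j ((qKsts j x).mpr ⟨s, hj⟩)
  -- the exceptional finite set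
  have hXfin : ((Dh A h ∩ T) ∪ ((Aᶜ \ (T ∪ ⋃ i ∈ F, K i)) \ Set.range f)).Finite :=
    hDfin.union hcovfin
  set L : List ℕ := hXfin.toFinset.toList with hLdef
  have hLmem : ∀ x, x ∈ L ↔
      x ∈ (Dh A h ∩ T) ∪ ((Aᶜ \ (T ∪ ⋃ i ∈ F, K i)) \ Set.range f) := by
    intro x
    rw [hLdef, Finset.mem_toList, Set.Finite.mem_toFinset]
  refine fur_aux A B h f hhc hhr hfc hfr qA KS qBst (fun s z => qKst j s (f z))
    qAp.to_comp qAs KSp.to_comp KSsound qBstp.to_comp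
    (fun s w hw => (qBsts w).mpr ⟨s, hw⟩) ?_
    ((qKstp j).to_comp.comp Computable.fst (hfc.comp Computable.snd)) ?_ ?_ L ?_
  · -- qBi : arbitrarily large elements of B appear in the enumeration
    intro n
    obtain ⟨w, hw⟩ := (hBI.diff (Set.finite_Iic n)).nonempty
    obtain ⟨s, hs⟩ := (qBsts w).mp hw.1
    exact ⟨s, w, hs, (Set.notMem_Iic.mp hw.2).le⟩
  · -- qVs : soundness of the `Bᶜ`-enumeration
    intro s z hz hzB
    exact hKsub j ((qKsts j (f z)).mpr ⟨s, hz⟩) ((hfr z).mp hzB)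
  · -- qVi : arbitrarily large elements outside `B`
    intro n
    obtain ⟨z, hz⟩ := (hinfKj.diff (Set.finite_Iic n)).nonempty
    obtain ⟨s, hs⟩ := (qKsts j (f z)).mp hz.1
    exact ⟨s, z, hs, (Set.notMem_Iic.mp hz.2).le⟩
  · -- the covering property
    intro x hxA hxL hdup
    obtain ⟨y, hy, he⟩ := hdup
    have hyA : y ∉ A := fun hyA => hxA ((hhr x).mpr (he ▸ (hhr y).mp hyA))
    have hxX : x ∉ (Dh A h ∩ T) ∪ ((Aᶜ \ (T ∪ ⋃ i ∈ F, K i)) \ Set.range f) :=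
      fun hc => hxL ((hLmem x).mpr hc)
    have hxD : x ∈ Dh A h := ⟨hxA, y, hy, hyA, he⟩
    have hxT : x ∉ T := fun hxT => hxX (Or.inl ⟨hxD, hxT⟩)
    by_cases hxK : x ∈ ⋃ i ∈ F, K i
    · obtain ⟨i, hiF, hxi⟩ := Set.mem_iUnion₂.mp hxK
      obtain ⟨s, hs⟩ := (qKsts i x).mp hxi
      refine Or.inl ⟨s, ?_⟩
      simp only [hKSdef, Bool.or_eq_true]
      exact Or.inl (List.any_eq_true.mpr ⟨i, Finset.mem_toList.mpr hiF, hs⟩)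
    · by_cases hxKj : x ∈ K j
      · obtain ⟨s, hs⟩ := (qKsts j x).mp hxKj
        refine Or.inl ⟨s, ?_⟩
        simp only [hKSdef, Bool.or_eq_true]
        exact Or.inr hs
      · right
        by_contra hnr
        push_neg at hnr
        refine hxX (Or.inr ⟨⟨hxA, fun hor => hor.elim hxT hxK⟩, ?_⟩)
        rintro ⟨z, hz⟩
        exact hnr z hz
end

section
/- (One-sided tail criterion) Let A be a noncomputable c.e. set with Aᶜ = K ⊔ T, where K ⊆ Aᶜ is c.e., and suppose that for every B ≡_m A: (1) for every many-one reduction h : A ≤_m B, D_h ∩ T is finite, and (2) for every many-one reduction f : B ≤_m A, f⁻¹(K) is infinite. Then A ≤_fo B for every B ≡_m A. -/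
open Set

private lemma primrec_mem_list (l : List ℕ) : Primrec fun x : ℕ => decide (x ∈ l) := by
  induction l with
  | nil => exact (Primrec.const false).of_eq (by simp)
  | cons a t ih =>
    refine (Primrec.cond (Primrec.beq.comp .id (.const a)) (.const true) ih).of_eq fun x => ?_
    by_cases hx : x = a <;> simp [hx]

private lemma dup_lemma {h : ℕ → ℕ} (hh : Computable h) :
    ∃ d : ℕ → Bool, Computable d ∧ ∀ x, d x = true ↔ ∃ y, y < x ∧ h y = h x := by
  have key : ∀ x m, (Nat.rec (motive := fun _ => Bool) false
      (fun y IH => IH || (h y == h x)) m) = true ↔ ∃ y, y < m ∧ h y = h x := by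
    intro x m
    induction m with
    | zero => simp
    | succ n ih =>
      show (Nat.rec (motive := fun _ => Bool) false _ n || (h n == h x) : Bool) = true ↔ _
      rw [Bool.or_eq_true, ih, beq_iff_eq]
      constructor
      · rintro (⟨y, hy, hyx⟩ | hnx)
        · exact ⟨y, Nat.lt_succ_of_lt hy, hyx⟩
        · exact ⟨n, Nat.lt_succ_self n, hnx⟩
      · rintro ⟨y, hy, hyx⟩
        rcases Nat.lt_succ_iff_lt_or_eq.1 hy with hy' | rfl
        · exact Or.inl ⟨y, hy', hyx⟩
        · exact Or.inr hyx
  refine ⟨fun x => Nat.rec (motive := fun _ => Bool) false (fun y IH => IH || (h y == h x)) x,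
    ?_, fun x => key x x⟩
  have hstep : Computable fun q : ℕ × (ℕ × Bool) => q.2.2 || (h q.2.1 == h q.1) := by
    refine (Computable.cond (Computable.snd.comp Computable.snd) (Computable.const true)
      ((Primrec.beq.to_comp).comp (hh.comp (Computable.fst.comp Computable.snd))
        (hh.comp Computable.fst))).of_eq fun q => ?_
    cases hb : q.2.2 <;> simp
  exact Computable.nat_rec Computable.id (Computable.const false) hstep.to₂

open Nat.Partrec.Code in
private lemma exists_enum {p : ℕ → Prop} (hp : REPred p) (hinf : {x | p x}.Infinite) :
    ∃ e : ℕ → ℕ, Computable e ∧ Function.Injective e ∧ ∀ n, p (e n) := by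
  classical
  obtain ⟨a0, ha0⟩ := hinf.nonempty
  have hF : Partrec fun a => (Part.assert (p a) fun _ => Part.some ()).map fun _ => (0 : ℕ) :=
    hp.map ((Computable.const 0).to₂)
  obtain ⟨c, hc⟩ := exists_code.1 (Partrec.nat_iff.1 hF)
  have hmem : ∀ a, p a ↔ ∃ s, (evaln s c a).isSome := by
    intro a
    constructor
    · intro ha
      have h0 : (0 : ℕ) ∈ eval c a := by
        rw [hc]
        exact Part.mem_map_iff _ |>.2 ⟨(), Part.mem_assert_iff.2 ⟨ha, Part.mem_some _⟩, rfl⟩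
      obtain ⟨s, hs⟩ := evaln_complete.1 h0
      exact ⟨s, Option.isSome_iff_exists.2 ⟨0, hs⟩⟩
    · rintro ⟨s, hs⟩
      obtain ⟨x, hx⟩ := Option.isSome_iff_exists.1 hs
      have hx' := evaln_sound hx
      rw [hc] at hx'
      obtain ⟨u, hu, -⟩ := Part.mem_map_iff _ |>.1 hx'
      exact (Part.mem_assert_iff.1 hu).1
  set u : ℕ → ℕ := fun k =>
    bif (evaln k.unpair.2 c k.unpair.1).isSome then k.unpair.1 else a0 with hu_def
  have hucomp : Computable u := by
    have h1 : Primrec fun k : ℕ => evaln k.unpair.2 c k.unpair.1 :=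
      primrec_evaln.comp <|
        ((Primrec.snd.comp Primrec.unpair).pair (Primrec.const c)).pair
          (Primrec.fst.comp Primrec.unpair)
    exact ((Primrec.option_isSome.comp h1).cond (Primrec.fst.comp Primrec.unpair)
      (Primrec.const a0)).to_comp
  have hu1 : ∀ k, p (u k) := by
    intro k
    cases hs : (evaln k.unpair.2 c k.unpair.1).isSome
    · have hk : u k = a0 := by simp [hu_def, hs]
      rw [hk]; exact ha0
    · have hk : u k = k.unpair.1 := by simp [hu_def, hs]
      rw [hk]; exact (hmem _).2 ⟨_, hs⟩
  have hu2 : ∀ a, p a → ∃ k, u k = a := by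
    intro a ha
    obtain ⟨s, hs⟩ := (hmem a).1 ha
    refine ⟨Nat.pair a s, ?_⟩
    simp [hu_def, Nat.unpair_pair, hs]
  have hub : ∀ b, ∃ k, b < u k := by
    intro b
    obtain ⟨a, hpa, hab⟩ := hinf.exists_gt b
    obtain ⟨k, hk⟩ := hu2 a hpa
    exact ⟨k, hk ▸ hab⟩
  let r : ℕ → ℕ := fun n =>
    Nat.rec (motive := fun _ => ℕ) 0 (fun _ i => Nat.find (hub (u i))) n
  have hrsucc : ∀ n, r (n + 1) = Nat.find (hub (u (r n))) := fun n => rfl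
  have hmono : StrictMono fun n => u (r n) := by
    apply strictMono_nat_of_lt_succ
    intro n
    rw [hrsucc]
    exact Nat.find_spec (hub (u (r n)))
  have hq : Partrec₂ fun (z : ℕ × (ℕ × ℕ)) (k : ℕ) =>
      (Part.some (decide (u z.2.2 < u k)) : Part Bool) := by
    have hlt : Computable fun q : (ℕ × (ℕ × ℕ)) × ℕ => decide (u q.1.2.2 < u q.2) :=
      (Primrec.nat_lt.decide.to_comp).comp
        (hucomp.comp (Computable.snd.comp (Computable.snd.comp Computable.fst)))
        (hucomp.comp Computable.snd)
    exact Partrec.of_eq hlt fun q => rfl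
  have hR : Partrec fun n : ℕ => Nat.rec (motive := fun _ => Part ℕ) (Part.some 0)
      (fun _ IH => IH.bind fun i =>
        Nat.rfind fun k => Part.some (decide (u i < u k))) n := by
    have := Partrec.nat_rec (f := fun n : ℕ => n) (g := fun _ : ℕ => (Part.some 0 : Part ℕ))
      (h := fun _ (pr : ℕ × ℕ) => Nat.rfind fun k => Part.some (decide (u pr.2 < u k)))
      Computable.id (Computable.const 0) (Partrec.rfind hq)
    exact this
  have hrmem : ∀ n, r n ∈ Nat.rec (motive := fun _ => Part ℕ) (Part.some 0)
      (fun _ IH => IH.bind fun i =>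
        Nat.rfind fun k => Part.some (decide (u i < u k))) n := by
    intro n
    induction n with
    | zero => exact Part.mem_some 0
    | succ n ih =>
      refine Part.mem_bind_iff.2 ⟨r n, ih, ?_⟩
      rw [hrsucc]
      refine Nat.mem_rfind.2 ⟨?_, fun {m} hm => ?_⟩
      · exact Part.mem_some_iff.2 (by simp [Nat.find_spec (hub (u (r n)))])
      · exact Part.mem_some_iff.2 (by simp [Nat.find_min (hub (u (r n))) hm])
  have hrcomp : Computable r := hR.of_eq_tot hrmem
  exact ⟨fun n => u (r n), hucomp.comp hrcomp, hmono.injective, fun n => hu1 _⟩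

/-- One-sided tail criterion. -/
theorem one_sided_tail (A K T : Set ℕ)
    (hAce : REPred (· ∈ A)) (hAnc : ¬ComputablePred (· ∈ A))
    (hsplit : Aᶜ = K ∪ T) (hdisj : Disjoint K T)
    (hKce : REPred (· ∈ K))
    (hfwd : ∀ B : Set ℕ, MEquiv A B → ∀ h : ℕ → ℕ, ManyOneRed h A B →
      (Dh A h ∩ T).Finite)
    (hback : ∀ B : Set ℕ, MEquiv A B → ∀ f : ℕ → ℕ, ManyOneRed f B A →
      (f ⁻¹' K).Infinite) :
    ∀ B : Set ℕ, MEquiv A B → FORed A B := by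
  classical
  intro B hB
  obtain ⟨⟨h, hhred⟩, ⟨f, hfred⟩⟩ := id hB
  obtain ⟨hhc, hredh⟩ := hhred
  obtain ⟨hfc, hredf⟩ := hfred
  have hKA : ∀ x, x ∈ K → x ∉ A := by
    intro x hx
    have : x ∈ Aᶜ := by rw [hsplit]; exact Or.inl hx
    exact this
  have hTA : ∀ x, x ∈ T → x ∉ A := by
    intro x hx
    have : x ∈ Aᶜ := by rw [hsplit]; exact Or.inr hx
    exact this
  -- the finite exceptional set
  have hFfin : (Dh A h ∩ T).Finite := hfwd B hB h ⟨hhc, hredh⟩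
  set lF : List ℕ := hFfin.toFinset.toList with hlF_def
  have hlF : ∀ x, x ∈ lF ↔ x ∈ Dh A h ∩ T := by
    intro x; simp [hlF_def, Set.Finite.mem_toFinset]
  -- duplicate detector
  obtain ⟨d, hdc, hd⟩ := dup_lemma hhc
  -- enumeration of non-elements of B
  have hNre : REPred fun z : ℕ => f z ∈ K := hKce.comp hfc
  have hNinf : {z : ℕ | f z ∈ K}.Infinite := hback B hB f ⟨hfc, hredf⟩
  obtain ⟨eN, heNc, heNi, heNp⟩ := exists_enum hNre hNinf
  have heNout : ∀ n, eN n ∉ B := fun n hn => hKA _ (heNp n) ((hredf _).1 hn)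
  -- enumeration of elements of B
  have hBre : REPred fun z : ℕ => f z ∈ A := hAce.comp hfc
  have hBinf : {z : ℕ | f z ∈ A}.Infinite := by
    by_contra hfin
    rw [Set.not_infinite] at hfin
    set l : List ℕ := hfin.toFinset.toList with hl_def
    have hl : ∀ z, z ∈ l ↔ f z ∈ A := by
      intro z; simp [hl_def, Set.Finite.mem_toFinset]
    refine hAnc ⟨Classical.decPred _, ?_⟩
    refine Computable.of_eq ((primrec_mem_list l).to_comp.comp hhc) fun x => ?_
    exact decide_eq_decide.2 (((hl (h x)).trans (hredf (h x)).symm).trans (hredh x).symm)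
  obtain ⟨eB, heBc, heBi, heBp⟩ := exists_enum hBre hBinf
  have heBin : ∀ n, eB n ∈ B := fun n => (hredf _).2 (heBp n)
  -- the decision procedure on A ∪ K
  set fA : ℕ →. Bool :=
    fun a => (Part.assert (a ∈ A) fun _ => Part.some ()).map fun _ => true with hfA_def
  set fK : ℕ →. Bool :=
    fun a => (Part.assert (a ∈ K) fun _ => Part.some ()).map fun _ => false with hfK_def
  have hfA : Partrec fA := hAce.map (Computable.const true).to₂
  have hfK : Partrec fK := hKce.map (Computable.const false).to₂
  have memfA : ∀ a b, b ∈ fA a ↔ a ∈ A ∧ b = true := by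
    intro a b
    simp [hfA_def, Part.mem_map_iff, Part.mem_assert_iff, Part.mem_some_iff, eq_comm,
      and_comm]
  have memfK : ∀ a b, b ∈ fK a ↔ a ∈ K ∧ b = false := by
    intro a b
    simp [hfK_def, Part.mem_map_iff, Part.mem_assert_iff, Part.mem_some_iff, eq_comm,
      and_comm]
  obtain ⟨kd, hkdc, hkds⟩ := Partrec.merge hfA hfK (fun a x hx y hy =>
    absurd ((memfA a x).1 hx).1 (hKA a ((memfK a y).1 hy).1))
  have htrue : ∀ a, a ∈ A → true ∈ kd a :=
    fun a ha => (hkds a true).2 (Or.inl ((memfA a true).2 ⟨ha, rfl⟩))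
  have hfalse : ∀ a, a ∈ K → false ∈ kd a :=
    fun a ha => (hkds a false).2 (Or.inr ((memfK a false).2 ⟨ha, rfl⟩))
  -- the finite-one reduction
  set g : ℕ → ℕ := fun x =>
    bif decide (x ∈ lF) then eN x
    else bif d x then (if x ∈ A then eB x else eN x) else h x with hg_def
  have hg1 : ∀ x, x ∈ lF → g x = eN x := by
    intro x hx; simp [hg_def, decide_eq_true hx]
  have hg2 : ∀ x, x ∉ lF → d x = true → g x = if x ∈ A then eB x else eN x := by
    intro x hx hdx; simp [hg_def, decide_eq_false hx, hdx]
  have hg3 : ∀ x, x ∉ lF → d x = false → g x = h x := by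
    intro x hx hdx; simp [hg_def, decide_eq_false hx, hdx]
  -- key: a non-exceptional duplicate outside A lies in K
  have hkey : ∀ x, x ∉ lF → d x = true → x ∉ A → x ∈ K := by
    intro x hx1 hdx hxA
    have hxc : x ∈ K ∪ T := by rw [← hsplit]; exact hxA
    rcases hxc with hxK | hxT
    · exact hxK
    · exfalso
      obtain ⟨y, hy, hyx⟩ := (hd x).1 hdx
      have hyA : y ∉ A := by
        intro hyA
        have : h y ∈ B := (hredh y).1 hyA
        rw [hyx] at this
        exact hxA ((hredh x).2 this)
      exact hx1 ((hlF x).2 ⟨⟨hxA, y, hy, hyA, hyx⟩, hxT⟩)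
  -- computability of g
  have hgc : Computable g := by
    set G : ℕ →. ℕ := fun x =>
      bif decide (x ∈ lF) then Part.some (eN x)
      else bif d x then (kd x).map (fun b => bif b then eB x else eN x)
      else Part.some (h x) with hG_def
    have heN' : Partrec fun x : ℕ => (Part.some (eN x) : Part ℕ) :=
      Partrec.of_eq heNc fun x => rfl
    have hh' : Partrec fun x : ℕ => (Part.some (h x) : Part ℕ) :=
      Partrec.of_eq hhc fun x => rfl
    have hstep : Computable₂ fun (x : ℕ) (b : Bool) => bif b then eB x else eN x :=
      (Computable.cond Computable.snd (heBc.comp Computable.fst)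
        (heNc.comp Computable.fst)).to₂
    have hGc : Partrec G :=
      Partrec.cond (primrec_mem_list lF).to_comp heN'
        (Partrec.cond hdc (hkdc.map hstep) hh')
    refine hGc.of_eq_tot fun x => ?_
    by_cases hx1 : x ∈ lF
    · rw [hg1 x hx1]
      simp [hG_def, decide_eq_true hx1, Part.mem_some]
    · cases hdx : d x
      · rw [hg3 x hx1 hdx]
        simp [hG_def, decide_eq_false hx1, hdx, Part.mem_some]
      · rw [hg2 x hx1 hdx]
        have hGx : G x = (kd x).map (fun b => bif b then eB x else eN x) := by
          simp [hG_def, decide_eq_false hx1, hdx]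
        rw [hGx]
        by_cases hxA : x ∈ A
        · rw [if_pos hxA]
          exact Part.mem_map_iff _ |>.2 ⟨true, htrue x hxA, rfl⟩
        · rw [if_neg hxA]
          exact Part.mem_map_iff _ |>.2 ⟨false, hfalse x (hkey x hx1 hdx hxA), rfl⟩
  -- correctness of g
  have hgcorr : ∀ x, x ∈ A ↔ g x ∈ B := by
    intro x
    by_cases hx1 : x ∈ lF
    · have hxT : x ∈ T := ((hlF x).1 hx1).2
      rw [hg1 x hx1]
      exact iff_of_false (hTA x hxT) (heNout _)
    · cases hdx : d x
      · rw [hg3 x hx1 hdx]; exact hredh x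
      · rw [hg2 x hx1 hdx]
        by_cases hxA : x ∈ A
        · rw [if_pos hxA]; exact iff_of_true hxA (heBin _)
        · rw [if_neg hxA]; exact iff_of_false hxA (heNout _)
  -- finite fibres
  have hgfib : ∀ v, (g ⁻¹' {v}).Finite := by
    intro v
    have hsub : g ⁻¹' {v} ⊆
        {x | eN x = v} ∪ ({x | eB x = v} ∪ {x | h x = v ∧ ∀ y, y < x → h y ≠ h x}) := by
      intro x hx
      have hx' : g x = v := hx
      by_cases hx1 : x ∈ lF
      · left; show eN x = v; rw [← hg1 x hx1]; exact hx'
      · cases hdx : d x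
        · right; right
          refine ⟨by rw [← hg3 x hx1 hdx]; exact hx', fun y hy hyx => ?_⟩
          have : d x = true := (hd x).2 ⟨y, hy, hyx⟩
          rw [hdx] at this
          exact Bool.false_ne_true this
        · by_cases hxA : x ∈ A
          · right; left
            show eB x = v
            rw [← hx', hg2 x hx1 hdx, if_pos hxA]
          · left
            show eN x = v
            rw [← hx', hg2 x hx1 hdx, if_neg hxA]
    refine Set.Finite.subset (Set.Finite.union ?_ (Set.Finite.union ?_ ?_)) hsub
    · exact Set.Subsingleton.finite fun a ha b hb => heNi (ha.trans hb.symm)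
    · exact Set.Subsingleton.finite fun a ha b hb => heBi (ha.trans hb.symm)
    · refine Set.Subsingleton.finite fun a ha b hb => ?_
      rcases lt_trichotomy a b with hab | hab | hab
      · exact absurd (ha.1.trans hb.1.symm) (hb.2 a hab)
      · exact hab
      · exact absurd (hb.1.trans ha.1.symm) (ha.2 b hab)
  exact ⟨g, hgc, hgcorr, hgfib⟩
end

section
/- (Type 3 backward covering) Let A be a noncomputable c.e. D-maximal set such that every c.e. set disjoint from A is almost contained in a fixed infinite noncomputable c.e. set K ⊆ Aᶜ. Then for every c.e. set B ≡_m A and every many-one reduction f : B ≤_m A, Aᶜ \ K ⊆* range(f). -/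
open Set

lemma rePred_comp {p : ℕ → Prop} (hp : REPred p) {f : ℕ → ℕ} (hf : Computable f) :
    REPred fun x => p (f x) :=
  Partrec.comp hp hf

lemma computable_decide_mem_list : ∀ L : List ℕ, Computable fun a : ℕ => decide (a ∈ L)
  | [] => (Computable.const false).of_eq (by simp)
  | b :: L =>
    (Computable.cond ((Primrec.eq.comp .id (.const b)).decide.to_comp)
      (Computable.const true) (computable_decide_mem_list L)).of_eq (by
        intro a
        by_cases h : a = b <;> simp [h])

lemma computablePred_finite {S : Set ℕ} (h : S.Finite) : ComputablePred (· ∈ S) := by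
  classical
  have : ComputablePred (· ∈ h.toFinset.toList) :=
    ⟨inferInstance, computable_decide_mem_list _⟩
  exact this.of_eq fun x => by simp

lemma rePred_or {p q : ℕ → Prop} (hp : REPred p) (hq : ComputablePred q) :
    REPred fun x => p x ∨ q x := by
  classical
  obtain ⟨D, hc⟩ := hq
  refine (Partrec.cond hc ((Computable.const ()).partrec) hp).of_eq fun a =>
    Part.ext fun u => ?_
  by_cases h : q a <;> simp [h, Part.mem_assert_iff]

lemma rePred_range {f : ℕ → ℕ} (hf : Computable f) : REPred (· ∈ Set.range f) := by
  have hc2 : Computable₂ fun (y x : ℕ) => (decide (f x = y)) :=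
    Primrec.eq.decide.to_comp.comp (hf.comp Computable.snd) Computable.fst
  have h1 : Partrec fun y => Nat.rfind fun x => (Part.some (decide (f x = y)) : Part Bool) :=
    Partrec.rfind hc2.partrec₂
  refine h1.dom_re.of_eq fun y => ?_
  refine (Nat.rfind_dom (p := fun x => Part.some (decide (f x = y)))).trans ?_
  simp [Set.range, eq_comm]

/-- Type 3 backward covering. -/
theorem type3_backward_covering (A : Set ℕ)
    (hAce : REPred (· ∈ A)) (hAnc : ¬ComputablePred (· ∈ A))
    (hDmax : ∀ W : Set ℕ, REPred (· ∈ W) → ∃ E : Set ℕ, REPred (· ∈ E) ∧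
      Disjoint E A ∧ ((W \ (A ∪ E)).Finite ∨ ((W ∪ (A ∪ E))ᶜ).Finite))
    (K : Set ℕ) (hKce : REPred (· ∈ K)) (hKinf : K.Infinite)
    (hKnc : ¬ComputablePred (· ∈ K)) (hKsub : K ⊆ Aᶜ)
    (hgen : ∀ D : Set ℕ, REPred (· ∈ D) → Disjoint D A → (D \ K).Finite) :
    ∀ B : Set ℕ, REPred (· ∈ B) → MEquiv A B → ∀ f : ℕ → ℕ, ManyOneRed f B A →
      ((Aᶜ \ K) \ Set.range f).Finite := by
  intro B hBce hM f hf
  obtain ⟨h, hh⟩ := hM.1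
  obtain ⟨hhcomp, hhred⟩ := hh
  obtain ⟨hfcomp, hfred⟩ := hf
  obtain ⟨E, hEce, hEdisj, hcase⟩ := hDmax (Set.range f) (rePred_range hfcomp)
  rcases hcase with hfin | hfin
  · exfalso; apply hAnc
    set S := Set.range f \ (A ∪ E) with hS
    have hBcompl : ∀ x, (f x ∈ E ∨ f x ∈ S) ↔ ¬(x ∈ B) := by
      intro x
      rw [hfred x]
      constructor
      · rintro (hE | hSx) hA
        · exact Set.disjoint_left.mp hEdisj hE hA
        · exact hSx.2 (Or.inl hA)
      · intro hx
        by_cases hE : f x ∈ E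
        · exact Or.inl hE
        · exact Or.inr ⟨⟨x, rfl⟩, fun hc => hc.elim hx hE⟩
    have h1 : REPred fun y => y ∈ E ∨ y ∈ S := rePred_or hEce (computablePred_finite hfin)
    have hre : REPred fun x => ¬ x ∈ B :=
      (rePred_comp h1 hfcomp).of_eq hBcompl
    have hBcomp : ComputablePred (· ∈ B) :=
      ComputablePred.computable_iff_re_compl_re'.2 ⟨hBce, hre⟩
    obtain ⟨D, hD⟩ := hBcomp
    exact ComputablePred.of_eq ⟨fun x => D (h x), hD.comp hhcomp⟩ fun x => (hhred x).symm
  · have hEfin : (E \ K).Finite := hgen E hEce hEdisj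
    apply (hEfin.union hfin).subset
    rintro x ⟨⟨hxA, hxK⟩, hxf⟩
    by_cases hx : x ∈ Set.range f ∪ (A ∪ E)
    · rcases hx with h1 | h1 | h1
      · exact absurd h1 hxf
      · exact absurd h1 hxA
      · exact Or.inl ⟨h1, hxK⟩
    · exact Or.inr hx
end

section
/- (Type 4 finite-union dichotomy) Let A be a c.e. D-maximal set and let {R₀, R₁, …} be a family of c.e. sets disjoint from A that generates D(A) (every c.e. set disjoint from A is almost contained in a finite union of the R_i). Then for every c.e. set W there is a finite F ⊆ ω such that either W ∩ Aᶜ ⊆* ⋃_{i∈F} R_i or Aᶜ \ ⋃_{i∈F} R_i ⊆* W. -/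
open Set

/-- Type 4 finite-union dichotomy. -/
theorem type4_dichotomy (A : Set ℕ) (hAce : REPred (· ∈ A))
    (hDmax : ∀ W : Set ℕ, REPred (· ∈ W) → ∃ E : Set ℕ, REPred (· ∈ E) ∧
      Disjoint E A ∧ ((W \ (A ∪ E)).Finite ∨ ((W ∪ (A ∪ E))ᶜ).Finite))
    (R : ℕ → Set ℕ) (hRce : ∀ i, REPred (· ∈ R i)) (hRdisj : ∀ i, Disjoint (R i) A)
    (hgen : ∀ D : Set ℕ, REPred (· ∈ D) → Disjoint D A →
      ∃ F : Finset ℕ, (D \ ⋃ i ∈ F, R i).Finite) :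
    ∀ W : Set ℕ, REPred (· ∈ W) → ∃ F : Finset ℕ,
      ((W ∩ Aᶜ) \ ⋃ i ∈ F, R i).Finite ∨ ((Aᶜ \ ⋃ i ∈ F, R i) \ W).Finite := by
  intro W hW
  obtain ⟨E, hEce, hEdisj, hcase⟩ := hDmax W hW
  obtain ⟨F, hF⟩ := hgen E hEce hEdisj
  refine ⟨F, ?_⟩
  rcases hcase with h | h
  · left
    apply (h.union hF).subset
    intro x hx
    obtain ⟨⟨hxW, hxA⟩, hxR⟩ := hx
    by_cases hE : x ∈ E
    · exact Or.inr ⟨hE, hxR⟩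
    · exact Or.inl ⟨hxW, fun hc => hc.elim hxA hE⟩
  · right
    apply (h.union hF).subset
    intro x hx
    obtain ⟨⟨hxA, hxR⟩, hxW⟩ := hx
    by_cases hE : x ∈ E
    · exact Or.inr ⟨hE, hxR⟩
    · exact Or.inl (fun hc => hc.elim hxW (fun hc' => hc'.elim hxA hE))
end

section
/- (Type 4 finite-union package) Let A be a noncomputable c.e. D-maximal set with a pairwise disjoint generating family {R₀, R₁, …} of infinite computable sets disjoint from A for D(A). Then for every c.e. B ≡_m A and every many-one reduction f : B ≤_m A, there are a finite F ⊆ ω and j ∉ F such that Aᶜ \ ⋃_{i∈F} R_i ⊆* range(f) and f⁻¹(R_j) is infinite. -/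
open Set

theorem re_comp' {p : ℕ → Prop} {f : ℕ → ℕ} (hp : REPred p) (hf : Computable f) :
    REPred fun x => p (f x) := hp.comp hf

theorem re_union' {p q : ℕ → Prop} (hp : REPred p) (hq : REPred q) :
    REPred fun x => p x ∨ q x := by
  obtain ⟨k, hk, K⟩ := Partrec.merge hp hq (fun a x _ y _ => Subsingleton.elim x y)
  exact hk.of_eq fun a => Part.ext fun u => by
    cases u
    simp only [K, Part.mem_assert_iff, Part.mem_some_iff, exists_prop, and_true, exists_const]

theorem re_range' {f : ℕ → ℕ} (hf : Computable f) :
    REPred fun y => y ∈ Set.range f := by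
  have hc : Computable₂ fun (a n : ℕ) => decide (f n = a) :=
    (Primrec.eq.decide.to_comp).comp (hf.comp Computable.snd) Computable.fst
  have hr : Partrec fun a => (Nat.rfind fun n => (decide (f n = a) : Part Bool)).map
      fun _ => () :=
    (Partrec.rfind hc.partrec₂).map ((Computable.const ()).comp Computable.fst).to₂
  refine hr.of_eq fun a => Part.ext fun u => ?_
  cases u
  simp only [Part.mem_map_iff, Part.mem_assert_iff, Part.mem_some_iff, and_true, exists_prop,
    exists_const, Set.mem_range]
  constructor
  · rintro ⟨n, hn⟩
    have := Nat.rfind_spec hn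
    simp only [Part.coe_some, Part.mem_some_iff] at this
    exact ⟨n, of_decide_eq_true this.symm⟩
  · rintro ⟨n, hn⟩
    obtain ⟨m, hm, -⟩ := Nat.rfind_min' (p := fun n => decide (f n = a)) (m := n) (by simp [hn])
    exact ⟨m, hm⟩

theorem compPred_finite {K : Set ℕ} (hK : K.Finite) : ComputablePred (· ∈ K) := by
  refine Set.Finite.induction_on K hK ?_ @fun a s _ _ ih => ?_
  · exact ComputablePred.computable_iff.2
      ⟨fun _ => false, Computable.const false, by funext x; simp⟩
  · obtain ⟨g, hg, hpg⟩ := ComputablePred.computable_iff.1 ih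
    refine ComputablePred.computable_iff.2
      ⟨fun x => decide (x = a) || g x,
        (Primrec.or.to_comp).comp ((Primrec.eq.decide.to_comp).comp Computable.id
          (Computable.const a)) hg, ?_⟩
    funext x
    simp only [Set.mem_insert_iff, hpg, Bool.or_eq_true, decide_eq_true_eq]

/-- Type 4 finite-union package. -/
theorem type4_package (A : Set ℕ)
    (hAce : REPred (· ∈ A)) (hAnc : ¬ComputablePred (· ∈ A))
    (hDmax : ∀ W : Set ℕ, REPred (· ∈ W) → ∃ E : Set ℕ, REPred (· ∈ E) ∧
      Disjoint E A ∧ ((W \ (A ∪ E)).Finite ∨ ((W ∪ (A ∪ E))ᶜ).Finite))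
    (R : ℕ → Set ℕ) (hRcomp : ∀ i, ComputablePred (· ∈ R i))
    (hRinf : ∀ i, (R i).Infinite) (hRsub : ∀ i, R i ⊆ Aᶜ)
    (hRdisj : ∀ i j, i ≠ j → Disjoint (R i) (R j))
    (hgen : ∀ D : Set ℕ, REPred (· ∈ D) → Disjoint D A →
      ∃ F : Finset ℕ, (D \ ⋃ i ∈ F, R i).Finite) :
    ∀ B : Set ℕ, REPred (· ∈ B) → MEquiv A B → ∀ f : ℕ → ℕ, ManyOneRed f B A →
      ∃ F : Finset ℕ, ∃ j ∉ F,
        ((Aᶜ \ ⋃ i ∈ F, R i) \ Set.range f).Finite ∧ (f ⁻¹' R j).Infinite := by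
  intro B hBce hMeq f hf
  obtain ⟨⟨h, hh⟩, -⟩ := hMeq
  obtain ⟨E, hEce, hEdisj, hcase⟩ := hDmax (Set.range f) (re_range' hf.1)
  rcases hcase with hfin | hfin
  · -- impossible case: B (hence A) would be computable
    exfalso
    set K := (Set.range f \ (A ∪ E)) with hKdef
    have hKA : (K \ A).Finite := hfin.subset diff_subset
    have hBc : ∀ x, ¬ x ∈ B ↔ (f x ∈ E ∨ f x ∈ K \ A) := by
      intro x
      rw [hf.2]
      constructor
      · intro hxA
        by_cases hE : f x ∈ E
        · exact Or.inl hE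
        · exact Or.inr ⟨⟨Set.mem_range_self x, fun hmem => hmem.elim hxA hE⟩, hxA⟩
      · rintro (hE | hK)
        · exact fun hA => hEdisj.le_bot ⟨hE, hA⟩
        · exact hK.2
    have hBcompl : REPred fun x => ¬ x ∈ B :=
      (re_union' (re_comp' hEce hf.1)
        (re_comp' (compPred_finite hKA).to_re hf.1)).of_eq fun x => (hBc x).symm
    have hBcomp : ComputablePred (· ∈ B) :=
      ComputablePred.computable_iff_re_compl_re'.2 ⟨hBce, hBcompl⟩
    obtain ⟨g, hg, hpg⟩ := ComputablePred.computable_iff.1 hBcomp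
    refine hAnc (ComputablePred.computable_iff.2 ⟨fun x => g (h x), hg.comp hh.1, ?_⟩)
    funext x
    have := hh.2 x
    simp only [this]
    exact congrFun hpg (h x)
  · -- main case
    obtain ⟨F, hF⟩ := hgen E hEce hEdisj
    obtain ⟨j, hj⟩ := F.exists_notMem
    refine ⟨F, j, hj, ?_, ?_⟩
    · refine ((hfin.union hF).subset) fun x hx => ?_
      obtain ⟨⟨hxA, hxR⟩, hxW⟩ := hx
      by_cases hmem : x ∈ Set.range f ∪ (A ∪ E)
      · rcases hmem with hW | hA | hE
        · exact absurd hW hxW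
        · exact absurd hA hxA
        · exact Or.inr ⟨hE, hxR⟩
      · exact Or.inl hmem
    · have hsub : R j \ Set.range f ⊆ (Aᶜ \ ⋃ i ∈ F, R i) \ Set.range f := by
        rintro x ⟨hxj, hxW⟩
        refine ⟨⟨hRsub j hxj, fun hxU => ?_⟩, hxW⟩
        obtain ⟨i, hiF, hxi⟩ := Set.mem_iUnion₂.1 hxU
        exact (hRdisj i j (fun hij => hj (hij ▸ hiF))).le_bot ⟨hxi, hxj⟩
      have h1 : (R j \ Set.range f).Finite := by
        refine Set.Finite.subset ?_ hsub
        refine ((hfin.union hF).subset) fun x hx => ?_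
        obtain ⟨⟨hxA, hxR⟩, hxW⟩ := hx
        by_cases hmem : x ∈ Set.range f ∪ (A ∪ E)
        · rcases hmem with hW | hA | hE
          · exact absurd hW hxW
          · exact absurd hA hxA
          · exact Or.inr ⟨hE, hxR⟩
        · exact Or.inl hmem
      have h2 : (R j ∩ Set.range f).Infinite := by
        have := (hRinf j).diff h1
        rw [sdiff_sdiff_right_self] at this
        exact this.mono (by exact fun x hx => ⟨hx.1, hx.2⟩)
      intro hfin'
      have : (f '' (f ⁻¹' R j)).Finite := hfin'.image f
      rw [Set.image_preimage_eq_inter_range] at this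
      exact h2 this
end

section
/- (Type 10, no large c.e. subset of the tail) Let A be a noncomputable c.e. set and suppose there are c.e. sets D₀ ⊆ D₁ ⊆ ⋯, all disjoint from A, such that every c.e. set disjoint from A is contained modulo finite in some D_j. Let K := D₀ and R := A ∪ K. Then there is no c.e. set C ⊆ Aᶜ containing all but finitely many elements of Rᶜ. -/
open Set

lemma RePred.or' {p q : ℕ → Prop} (hp : REPred p) (hq : REPred q) :
    REPred fun a => p a ∨ q a := by
  obtain ⟨k, hk, hK⟩ := Partrec.merge' hp hq
  exact hk.dom_re.of_eq fun a => by
    simp [(hK a).2, Part.assert]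

lemma finite_re {F : Set ℕ} (hF : F.Finite) : REPred (· ∈ F) := by
  have : ComputablePred (· ∈ F) := by
    lift F to Finset ℕ using hF
    have : PrimrecPred (fun x => x ∈ F) := by
      classical
      induction F using Finset.induction_on with
      | empty =>
          refine Primrec.primrecPred ?_
          exact (Primrec.const false).of_eq (by simp)
      | @insert a s ha ih =>
          have : PrimrecPred fun x : ℕ => x = a ∨ x ∈ s :=
            (PrimrecPred.or (Primrec.eq.comp Primrec.id (Primrec.const a)) ih)
          exact this.of_eq (by simp [Finset.mem_insert])
    exact this.computablePred
  exact this.to_re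

/-- Type 10: no large c.e. subset of the tail. -/
theorem type10_no_large_cee (A : Set ℕ)
    (hAce : REPred (· ∈ A)) (hAnc : ¬ComputablePred (· ∈ A))
    (D : ℕ → Set ℕ) (hDce : ∀ i, REPred (· ∈ D i))
    (hDmono : ∀ i, D i ⊆ D (i + 1)) (hDdisj : ∀ i, Disjoint (D i) A)
    (hgen : ∀ C : Set ℕ, REPred (· ∈ C) → Disjoint C A → ∃ j, (C \ D j).Finite) :
    ¬∃ C : Set ℕ, REPred (· ∈ C) ∧ C ⊆ Aᶜ ∧ ((A ∪ D 0)ᶜ \ C).Finite := by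
  rintro ⟨C, hCce, hCsub, hfin⟩
  obtain ⟨j, hj⟩ := hgen C hCce (Set.disjoint_left.2 fun x hx => hCsub hx)
  have hD0j : ∀ i, D 0 ⊆ D i := by
    intro i; induction i with
    | zero => exact subset_rfl
    | succ n ih => exact ih.trans (hDmono n)
  have hDjA : D j ⊆ Aᶜ := (hDdisj j).subset_compl_right
  have hFfin : (Aᶜ \ D j).Finite := by
    refine (hfin.union hj).subset ?_
    rintro x ⟨hxA, hxD⟩
    by_cases hxC : x ∈ C
    · exact Or.inr ⟨hxC, hxD⟩
    · refine Or.inl ⟨?_, hxC⟩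
      simp only [Set.mem_compl_iff, Set.mem_union]
      exact fun h => h.elim hxA (fun h0 => hxD (hD0j j h0))
  have hre : REPred (· ∈ Aᶜ) := by
    refine (RePred.or' (hDce j) (finite_re hFfin)).of_eq fun a => ?_
    constructor
    · rintro (h | h)
      · exact hDjA h
      · exact h.1
    · intro h
      by_cases hd : a ∈ D j
      · exact Or.inl hd
      · exact Or.inr ⟨h, hd⟩
  exact hAnc (ComputablePred.computable_iff_re_compl_re'.2 ⟨hAce, hre.of_eq fun a => by simp⟩)
end
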